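/- arXiv:2006.11028 — 2 statements merged into one kernel-verified Lean document; each statement's English description precedes it below -/
import Mathlib

section
/- Let d : ℝ → ℝ be an additive function and let α, β ∈ ℝ satisfy either 0 < 2α < β < π or -π < α < 2β < 0. If d(cot(x)) = -(1/sin²(x))·d(x) holds for all x ∈ (α, β), then d is a standard derivation. -/
/-!
The double-angle formula `cot 2x = (cot x - tan x) / 2` turns the rule for `cot` at `x` and at
`2x` into `d (tan x) = d x / cos² x`, i.e. into the inverse law `d (1 / y) = -d y / y²` at
`y = tan x`; so the inverse law holds on an interval of positive reals. Since `d` is `ℚ`-linear,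
rescaling by rationals spreads it to every `y ≠ 0`. Applying `d` to
`1 / (y - 1) - 1 / y = 1 / (y² - y)` then gives `d (y²) = 2 y d y`, and polarization gives the
Leibniz rule. As `cot` is odd, the case `α, β < 0` reflects to the positive one.
-/

open Real Set

namespace AddMonoidHom

variable (f : ℝ →+ ℝ)

theorem map_ratCast_mul (q : ℚ) (x : ℝ) : f (q * x) = q * f x := by
  simpa only [smul_eq_mul] using map_ratCast_smul f ℝ ℝ q x

theorem map_inv_of_forall_mem_Ioo {a b : ℝ} (ha : 0 < a) (hab : a < b)
    (h : ∀ y ∈ Ioo a b, f y⁻¹ = -f y / y ^ 2) {y : ℝ} (hy : y ≠ 0) :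
    f y⁻¹ = -f y / y ^ 2 := by
  have hpos : ∀ y : ℝ, 0 < y → f y⁻¹ = -f y / y ^ 2 := by
    intro y hy
    obtain ⟨q, hbq, hqa⟩ := exists_rat_btwn (div_lt_div_of_pos_left hy ha hab)
    have hq : (0 : ℝ) < q := (div_pos hy (ha.trans hab)).trans hbq
    have hmem : y / q ∈ Ioo a b := by
      rw [div_lt_iff₀ (ha.trans hab)] at hbq
      rw [lt_div_iff₀ ha] at hqa
      constructor
      · rw [lt_div_iff₀ hq]; linarith
      · rw [div_lt_iff₀ hq]; linarith
    have hfy : f y = q * f (y / q) := by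
      rw [← map_ratCast_mul, mul_div_cancel₀ _ hq.ne']
    have hfy_inv : f y⁻¹ = ((q⁻¹ : ℚ) : ℝ) * f (y / q)⁻¹ := by
      rw [← map_ratCast_mul, Rat.cast_inv, inv_div, ← div_eq_inv_mul,
        div_div_cancel_left' hq.ne']
    rw [hfy_inv, h _ hmem, hfy]
    push_cast
    field_simp
  rcases hy.lt_or_gt with hneg | hpos'
  · have hneg_inv := hpos (-y) (neg_pos.2 hneg)
    rw [inv_neg, map_neg, map_neg, neg_sq] at hneg_inv
    linear_combination -hneg_inv
  · exact hpos y hpos'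

theorem map_sq_of_map_inv (h : ∀ y ≠ 0, f y⁻¹ = -f y / y ^ 2) (y : ℝ) :
    f (y ^ 2) = 2 * y * f y := by
  have h1 : f 1 = 0 := by
    have h1_inv := h 1 one_ne_zero
    norm_num at h1_inv
    linarith
  rcases eq_or_ne y 0 with rfl | hy0
  · simp
  rcases eq_or_ne y 1 with rfl | hy1
  · simp [h1]
  have hy1' : y - 1 ≠ 0 := sub_ne_zero.2 hy1
  have hyy : y ^ 2 - y ≠ 0 := by
    rw [show y ^ 2 - y = y * (y - 1) by ring]
    exact mul_ne_zero hy0 hy1'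
  have hua : (y - 1)⁻¹ - y⁻¹ = (y ^ 2 - y)⁻¹ := by field_simp; ring
  have key := congrArg f hua
  rw [map_sub, h _ hy1', h _ hy0, h _ hyy, map_sub, map_sub, h1] at key
  field_simp at key
  linear_combination key

theorem map_mul_of_map_sq (h : ∀ y, f (y ^ 2) = 2 * y * f y) (x y : ℝ) :
    f (x * y) = f x * y + x * f y := by
  have hsum : f ((x + y) ^ 2) = f (x ^ 2) + 2 * f (x * y) + f (y ^ 2) := by
    rw [show (x + y) ^ 2 = x ^ 2 + (x * y + x * y) + y ^ 2 by ring, map_add, map_add, map_add]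
    ring
  rw [h, h, h, map_add] at hsum
  linear_combination -hsum / 2

theorem map_tan_of_map_cot {x : ℝ} (hs : sin x ≠ 0) (hc : cos x ≠ 0)
    (h1 : f (cos x / sin x) = -(1 / sin x ^ 2) * f x)
    (h2 : f (cos (2 * x) / sin (2 * x)) = -(1 / sin (2 * x) ^ 2) * f (2 * x)) :
    f (tan x) = f x / cos x ^ 2 := by
  have hdouble : ∀ z, f (2 * z) = 2 * f z := fun z => by rw [two_mul, map_add, two_mul]
  have hcot : 2 * (cos (2 * x) / sin (2 * x)) = cos x / sin x - tan x := by
    rw [tan_eq_sin_div_cos, sin_two_mul, cos_two_mul]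
    field_simp
    linear_combination sin_sq_add_cos_sq x
  have key := congrArg f hcot
  rw [hdouble, h2, map_sub, h1, hdouble, sin_two_mul] at key
  field_simp at key
  rw [eq_div_iff (pow_ne_zero 2 hc)]
  apply mul_left_cancel₀ (pow_ne_zero 2 hs)
  linear_combination key - f x * sin_sq_add_cos_sq x

theorem map_inv_tan_of_map_cot {x : ℝ} (hs : sin x ≠ 0) (hc : cos x ≠ 0)
    (h1 : f (cos x / sin x) = -(1 / sin x ^ 2) * f x)
    (h2 : f (cos (2 * x) / sin (2 * x)) = -(1 / sin (2 * x) ^ 2) * f (2 * x)) :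
    f (tan x)⁻¹ = -f (tan x) / tan x ^ 2 := by
  rw [map_tan_of_map_cot f hs hc h1 h2, tan_eq_sin_div_cos, inv_div, h1]
  field_simp

theorem map_cot_neg_Ioo {α β : ℝ}
    (h : ∀ x ∈ Ioo α β, f (cos x / sin x) = -(1 / sin x ^ 2) * f x) :
    ∀ x ∈ Ioo (-β) (-α), f (cos x / sin x) = -(1 / sin x ^ 2) * f x := by
  intro x hx
  have hneg := h (-x) ⟨by linarith [hx.2], by linarith [hx.1]⟩
  rwa [cos_neg, sin_neg, div_neg, map_neg, map_neg, neg_sq, mul_neg, neg_inj] at hneg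

theorem map_inv_of_map_cot_Ioo {α β : ℝ} (h0 : 0 < 2 * α) (hαβ : 2 * α < β) (hβ : β < π)
    (h : ∀ x ∈ Ioo α β, f (cos x / sin x) = -(1 / sin x ^ 2) * f x) :
    ∀ y ∈ Ioo (tan α) (tan (β / 2)), f y⁻¹ = -f y / y ^ 2 := by
  rintro y ⟨hαy, hyβ⟩
  have hα : α < arctan y := by
    rw [← arctan_tan (x := α) (by linarith [pi_pos]) (by linarith)]
    exact arctan_strictMono hαy
  have hβ' : arctan y < β / 2 := by
    rw [← arctan_tan (x := β / 2) (by linarith [pi_pos]) (by linarith)]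
    exact arctan_strictMono hyβ
  rw [← tan_arctan y]
  exact map_inv_tan_of_map_cot f
    (sin_pos_of_pos_of_lt_pi (by linarith) (by linarith)).ne'
    (cos_pos_of_mem_Ioo ⟨by linarith [pi_pos], arctan_lt_pi_div_two y⟩).ne'
    (h _ ⟨hα, by linarith⟩) (h _ ⟨by linarith, by linarith⟩)

theorem map_mul_of_map_cot_Ioo {α β : ℝ} (h0 : 0 < 2 * α) (hαβ : 2 * α < β) (hβ : β < π)
    (h : ∀ x ∈ Ioo α β, f (cos x / sin x) = -(1 / sin x ^ 2) * f x) (x y : ℝ) :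
    f (x * y) = f x * y + x * f y := by
  have htan_pos : 0 < tan α := tan_pos_of_pos_of_lt_pi_div_two (by linarith) (by linarith)
  have htan_lt : tan α < tan (β / 2) :=
    tan_lt_tan_of_lt_of_lt_pi_div_two (by linarith [pi_pos]) (by linarith) (by linarith)
  have hinv (z : ℝ) (hz : z ≠ 0) : f z⁻¹ = -f z / z ^ 2 :=
    f.map_inv_of_forall_mem_Ioo htan_pos htan_lt (f.map_inv_of_map_cot_Ioo h0 hαβ hβ h) hz
  exact f.map_mul_of_map_sq (f.map_sq_of_map_inv hinv) x y

end AddMonoidHom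

/-- If an additive function `d` derivates `cot = cos / sin` on `(α, β)` with
`0 < 2α < β < π` or `-π < α < 2β < 0`, then `d` is a standard derivation. -/
theorem stmt_16 (d : ℝ → ℝ) (hd : ∀ x y : ℝ, d (x + y) = d x + d y)
    (α β : ℝ)
    (hαβ : (0 < 2 * α ∧ 2 * α < β ∧ β < Real.pi) ∨
           (-Real.pi < α ∧ α < 2 * β ∧ 2 * β < 0))
    (h : ∀ x ∈ Set.Ioo α β,
      d (Real.cos x / Real.sin x) = -(1 / (Real.sin x) ^ 2) * d x) :
    ∀ x y : ℝ, d (x * y) = d x * y + x * d y := by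
  let f : ℝ →+ ℝ := AddMonoidHom.mk' d hd
  rcases hαβ with ⟨h0, hαβ, hβ⟩ | ⟨hα, hαβ, hβ⟩
  · exact f.map_mul_of_map_cot_Ioo h0 hαβ hβ h
  · exact f.map_mul_of_map_cot_Ioo (by linarith) (by linarith) (by linarith) (f.map_cot_neg_Ioo h)
end

section
/- Let d : ℝ → ℝ be an additive function, let I be a nonempty open interval with 0 ∉ I, and let P, Q : I → ℝ be Laurent polynomials P(u) = Σ_{k∈ℤ} p_k u^k, Q(u) = Σ_{k∈ℤ} q_k u^k with rational coefficients, only finitely many of which are nonzero. Assume Q' is nowhere zero on I (so Q is injective on I with differentiable inverse Q⁻¹ on J := Q(I)), that P - p₀ and Q - q₀ are linearly independent, and that d derivates P ∘ Q⁻¹ on J, i.e., d(P(Q⁻¹(v))) = P'(Q⁻¹(v))·(1/Q'(Q⁻¹(v)))·d(v) for all v ∈ J. Then d is a standard derivation. -/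
/-!
Since `d` is additive it is `ℚ`-linear, so the hypothesis `d(P u) Q'(u) = P'(u) d(Q u)` reads
`∑ p_k q_j (j u^(j-1) d(u^k) - k u^(k-1) d(u^j)) = 0`. Replacing `u` by `r u` with `r` rational
multiplies the `(k, j)` term by `r^(k+j-1)`; since infinitely many such `r` are admissible, every
homogeneous component vanishes, and this then holds at every `v ≠ 0`. Among the exponent pairs
`k < l` with `p_k q_l ≠ p_l q_k` (they exist by the linear independence of `P - p₀`, `Q - q₀`),
the pair with `k` and then `l` minimal is the only one surviving in its component, which gives
`l v^(l-1) d(v^k) = k v^(k-1) d(v^l)` for all `v ≠ 0`.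

Such relations can be rescaled (`v ↦ v^m`) and composed; from one with `k ≠ ±l` this yields a
relation between two distinct positive exponents, and expanding it at `v = 1 + t x` in the rational
variable `t` gives `d(x²) = 2 x d(x)`. The remaining case `k = -l` gives `d(1/y) = -d(y)/y²` for
`y > 0`, which again forces `d(x²) = 2 x d(x)`; polarization then yields the Leibniz rule.
-/

open Finset Polynomial

theorem map_ratCast_mul (d : ℝ →+ ℝ) (r : ℚ) (x : ℝ) : d (r * x) = r * d x := by
  simpa only [Rat.smul_def] using map_rat_smul d r x

section PairMinor

variable {K : Type*} [Field K] (p q : ℤ → K)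

def pairMinor (k j : ℤ) : K := p k * q j - p j * q k

theorem pairMinor_swap (k j : ℤ) : pairMinor p q j k = -pairMinor p q k j := by
  unfold pairMinor; ring

theorem pairMinor_self (k : ℤ) : pairMinor p q k k = 0 := sub_self _

theorem pairMinor_eq_zero_of_left {k j : ℤ} (h : p k = 0 ∧ q k = 0) : pairMinor p q k j = 0 := by
  simp [pairMinor, h.1, h.2]

theorem pairMinor_eq_zero_of_pairMinor_eq_zero {i k j : ℤ} (hi : p i ≠ 0 ∨ q i ≠ 0)
    (hk : pairMinor p q i k = 0) (hj : pairMinor p q i j = 0) : pairMinor p q k j = 0 := by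
  unfold pairMinor at *
  rcases hi with hi | hi
  · refine (mul_eq_zero.mp ?_).resolve_left hi
    linear_combination p k * hj - p j * hk
  · refine (mul_eq_zero.mp ?_).resolve_left hi
    linear_combination q k * hj - q j * hk

theorem exists_extremal_pairMinor (s : Finset ℤ) (h : ∃ k ∈ s, ∃ j ∈ s, pairMinor p q k j ≠ 0) :
    ∃ k₀ ∈ s, ∃ l₀ ∈ s, k₀ < l₀ ∧ pairMinor p q k₀ l₀ ≠ 0 ∧
      ∀ k ∈ s, ∀ j ∈ s, k < j → k + j = k₀ + l₀ → k ≠ k₀ → pairMinor p q k j = 0 := by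
  classical
  obtain ⟨k₁, hk₁, j₁, hj₁, hw₁⟩ := h
  set T := s.filter fun k => ∃ j ∈ s, pairMinor p q k j ≠ 0
  have hT : T.Nonempty := ⟨k₁, mem_filter.mpr ⟨hk₁, j₁, hj₁, hw₁⟩⟩
  obtain ⟨hk₀, hT₀⟩ := mem_filter.mp (T.min'_mem hT)
  set k₀ := T.min' hT
  set U := s.filter fun j => pairMinor p q k₀ j ≠ 0
  have hU : U.Nonempty := let ⟨j, hj, hw⟩ := hT₀; ⟨j, mem_filter.mpr ⟨hj, hw⟩⟩
  obtain ⟨hl₀, hw₀⟩ := mem_filter.mp (U.min'_mem hU)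
  set l₀ := U.min' hU
  have hk₀_le : ∀ k ∈ s, ∀ j ∈ s, pairMinor p q k j ≠ 0 → k₀ ≤ k := fun k hk j hj hw =>
    T.min'_le k (mem_filter.mpr ⟨hk, j, hj, hw⟩)
  have hl₀_le : ∀ j ∈ s, pairMinor p q k₀ j ≠ 0 → l₀ ≤ j := fun j hj hw =>
    U.min'_le j (mem_filter.mpr ⟨hj, hw⟩)
  have hlt : k₀ < l₀ := by
    refine lt_of_le_of_ne (hk₀_le l₀ hl₀ k₀ hk₀ ?_) fun he => hw₀ (he ▸ pairMinor_self p q k₀)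
    rwa [pairMinor_swap, neg_ne_zero]
  refine ⟨k₀, hk₀, l₀, hl₀, hlt, hw₀, fun k hk j hj hkj hsum hkk₀ => ?_⟩
  by_contra hw
  have hk₀k : k₀ < k := lt_of_le_of_ne (hk₀_le k hk j hj hw) (Ne.symm hkk₀)
  have hi : p k₀ ≠ 0 ∨ q k₀ ≠ 0 := by
    by_contra! h0
    exact hw₀ (pairMinor_eq_zero_of_left p q h0)
  refine hw (pairMinor_eq_zero_of_pairMinor_eq_zero p q hi ?_ ?_)
  · by_contra h; have := hl₀_le k hk h; omega
  · by_contra h; have := hl₀_le j hj h; omega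

end PairMinor

/-- For a standard derivation `d (v ^ k) = k * v ^ (k - 1) * d v`, so this vanishes identically. -/
noncomputable def powDefect (d : ℝ →+ ℝ) (v : ℝ) (k j : ℤ) : ℝ :=
  j * v ^ (j - 1) * d (v ^ k) - k * v ^ (k - 1) * d (v ^ j)

theorem powDefect_swap (d : ℝ →+ ℝ) (v : ℝ) (k j : ℤ) : powDefect d v j k = -powDefect d v k j := by
  unfold powDefect; ring

def PowDefectVanishes (d : ℝ →+ ℝ) (K L : ℤ) : Prop :=
  ∀ v : ℝ, v ≠ 0 → powDefect d v K L = 0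

namespace PowDefectVanishes

variable {d : ℝ →+ ℝ} {K L M : ℤ}

theorem symm (h : PowDefectVanishes d K L) : PowDefectVanishes d L K := fun v hv => by
  rw [powDefect_swap, h v hv, neg_zero]

theorem mul_left (h : PowDefectVanishes d K L) (m : ℤ) : PowDefectVanishes d (m * K) (m * L) := by
  intro v hv
  have hpow : ∀ n : ℤ, v ^ (m * n - 1) = v ^ (m - 1) * v ^ (m * (n - 1)) := fun n => by
    rw [← zpow_add₀ hv]; ring_nf
  have := h (v ^ m) (zpow_ne_zero m hv)
  simp only [powDefect, ← zpow_mul] at this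
  rw [powDefect, hpow, hpow]
  push_cast
  linear_combination m * v ^ (m - 1) * this

theorem trans (h₁ : PowDefectVanishes d K L) (h₂ : PowDefectVanishes d L M) (hL : L ≠ 0) :
    PowDefectVanishes d K M := by
  intro v hv
  have hL' : (L : ℝ) * v ^ (L - 1) ≠ 0 := mul_ne_zero (Int.cast_ne_zero.mpr hL) (zpow_ne_zero _ hv)
  refine (mul_eq_zero.mp ?_).resolve_left hL'
  have e1 := h₁ v hv
  have e2 := h₂ v hv
  unfold powDefect at *
  linear_combination M * v ^ (M - 1) * e1 + K * v ^ (K - 1) * e2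

theorem map_one (h : PowDefectVanishes d K L) (hKL : K ≠ L) : d 1 = 0 := by
  have h1 := h 1 one_ne_zero
  simp only [powDefect, one_zpow, mul_one] at h1
  have hLK : (L : ℝ) - K ≠ 0 := sub_ne_zero.mpr (Int.cast_injective.ne hKL.symm)
  exact (mul_eq_zero.mp (by linear_combination h1 : ((L : ℝ) - K) * d 1 = 0)).resolve_left hLK

theorem sq (h : PowDefectVanishes d K L) (hK : K ≠ 0) (hL : L ≠ 0) :
    PowDefectVanishes d (K * K) (L * L) := by
  have hKL := h.mul_left K
  have hLL := h.mul_left L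
  rw [mul_comm L K] at hLL
  exact hKL.trans hLL (mul_ne_zero hK hL)

end PowDefectVanishes

theorem powDefect_ratCast_mul (d : ℝ →+ ℝ) {r : ℚ} (hr : r ≠ 0) (v : ℝ) (k j : ℤ) :
    powDefect d (r * v) k j = (r : ℝ) ^ (k + j - 1) * powDefect d v k j := by
  have hr' : (r : ℝ) ≠ 0 := Rat.cast_ne_zero.mpr hr
  have hd : ∀ n : ℤ, d ((r : ℝ) ^ n * v ^ n) = (r : ℝ) ^ n * d (v ^ n) := fun n => by
    rw [← Rat.cast_zpow, map_ratCast_mul]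
  have e₁ : (r : ℝ) ^ (k + j - 1) = (r : ℝ) ^ k * (r : ℝ) ^ (j - 1) := by
    rw [← zpow_add₀ hr']; ring_nf
  have e₂ : (r : ℝ) ^ (k + j - 1) = (r : ℝ) ^ (k - 1) * (r : ℝ) ^ j := by
    rw [← zpow_add₀ hr']; ring_nf
  simp only [powDefect, mul_zpow, hd]
  linear_combination (k * v ^ (k - 1) * d (v ^ j)) * e₂ - (j * v ^ (j - 1) * d (v ^ k)) * e₁

theorem powDefect_zero_left (d : ℝ →+ ℝ) (hd : d 1 = 0) (v : ℝ) (j : ℤ) :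
    powDefect d v 0 j = 0 := by
  simp [powDefect, hd]

theorem powDefect_zero_right (d : ℝ →+ ℝ) (hd : d 1 = 0) (v : ℝ) (k : ℤ) :
    powDefect d v k 0 = 0 := by
  simp [powDefect, hd]

theorem sum_filter_eq_zero_of_sum_zpow_eq_zero {K ι : Type*} [Field K] (s : Finset ι) (c : ι → K)
    (e : ι → ℤ) {S : Set K} (hS : S.Infinite) (hS0 : 0 ∉ S)
    (h : ∀ x ∈ S, ∑ i ∈ s, c i * x ^ e i = 0) (n : ℤ) : ∑ i ∈ s with e i = n, c i = 0 := by
  classical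
  set N : ℕ := ∑ i ∈ s, (e i).natAbs
  have hN : ∀ i ∈ s, 0 ≤ e i + N := fun i hi => by
    have := single_le_sum (f := fun i => (e i).natAbs) (fun _ _ => Nat.zero_le _) hi
    omega
  -- shifting all exponents by `N` turns the Laurent sum into a polynomial
  set f : K[X] := ∑ i ∈ s, C (c i) * X ^ (e i + N).toNat
  have hf : f = 0 := by
    refine eq_zero_of_infinite_isRoot _ (hS.mono fun x hx => ?_)
    have hx0 : x ≠ 0 := ne_of_mem_of_not_mem hx hS0
    have hfx : f.eval x = x ^ (N : ℤ) * ∑ i ∈ s, c i * x ^ e i := by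
      simp only [f, eval_finsetSum, eval_mul, eval_C, eval_pow, eval_X, mul_sum]
      refine sum_congr rfl fun i hi => ?_
      rw [← zpow_natCast, Int.toNat_of_nonneg (hN i hi), zpow_add₀ hx0]
      ring
    simp [IsRoot, hfx, h x hx]
  by_cases hn : 0 ≤ n + N
  · have hcoeff := congrArg (coeff · (n + N).toNat) hf
    simp only [f, finsetSum_coeff, coeff_C_mul_X_pow, coeff_zero] at hcoeff
    rw [← hcoeff, sum_filter]
    refine sum_congr rfl fun i hi => if_congr ?_ rfl rfl
    have := hN i hi
    omega
  · refine sum_eq_zero fun i hi => absurd (hN i (mem_filter.mp hi).1) ?_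
    rw [(mem_filter.mp hi).2]
    exact hn

theorem infinite_setOf_ratCast_mul_mem_Ioo {a b v : ℝ} (hab : a < b) (hv : v ≠ 0) :
    {r : ℚ | (r : ℝ) * v ∈ Set.Ioo a b}.Infinite := by
  have hopen : IsOpen {x : ℝ | x * v ∈ Set.Ioo a b} := isOpen_Ioo.preimage (continuous_mul_const v)
  obtain ⟨r, hr⟩ := Rat.denseRange_cast.exists_mem_open hopen
    ⟨(a + b) / 2 / v, show (a + b) / 2 / v * v ∈ Set.Ioo a b by
      rw [div_mul_cancel₀ _ hv]; constructor <;> linarith⟩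
  exact infinite_of_mem_nhds r
    ((hopen.preimage Rat.continuous_coe_real).mem_nhds hr)

section GradedSums

variable (d : ℝ →+ ℝ) (p q : ℤ → ℚ) (s : Finset ℤ)

theorem sum_filter_powDefect_eq_zero {a b : ℝ} (hab : a < b) (h0 : (0 : ℝ) ∉ Set.Ioo a b)
    (h : ∀ u ∈ Set.Ioo a b, ∑ kj ∈ s ×ˢ s, (p kj.1 * q kj.2 : ℝ) * powDefect d u kj.1 kj.2 = 0)
    {v : ℝ} (hv : v ≠ 0) (n : ℤ) :
    ∑ kj ∈ s ×ˢ s with kj.1 + kj.2 - 1 = n,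
      (p kj.1 * q kj.2 : ℝ) * powDefect d v kj.1 kj.2 = 0 := by
  refine sum_filter_eq_zero_of_sum_zpow_eq_zero _ _ _
    ((infinite_setOf_ratCast_mul_mem_Ioo hab hv).image Rat.cast_injective.injOn) ?_ ?_ n
  · rintro ⟨r, hr, hr0⟩
    exact h0 (by simpa [hr0] using hr)
  · rintro _ ⟨r, hr, rfl⟩
    have hr0 : r ≠ 0 := by rintro rfl; exact h0 (by simpa using hr)
    rw [← h _ hr]
    refine sum_congr rfl fun kj _ => ?_
    rw [powDefect_ratCast_mul d hr0]
    ring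

theorem sum_filter_pairMinor_mul_powDefect_eq_zero {v : ℝ} {n : ℤ}
    (h : ∑ kj ∈ s ×ˢ s with kj.1 + kj.2 - 1 = n,
      (p kj.1 * q kj.2 : ℝ) * powDefect d v kj.1 kj.2 = 0) :
    ∑ kj ∈ s ×ˢ s with kj.1 + kj.2 - 1 = n,
      ((pairMinor p q kj.1 kj.2 : ℚ) : ℝ) * powDefect d v kj.1 kj.2 = 0 := by
  have hswap : ∑ kj ∈ s ×ˢ s with kj.1 + kj.2 - 1 = n,
      (p kj.2 * q kj.1 : ℝ) * powDefect d v kj.1 kj.2 =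
      -∑ kj ∈ s ×ˢ s with kj.1 + kj.2 - 1 = n, (p kj.1 * q kj.2 : ℝ) * powDefect d v kj.1 kj.2 := by
    rw [← sum_neg_distrib]
    refine sum_equiv (Equiv.prodComm ℤ ℤ) (fun kj => ?_) fun kj _ => ?_
    · simp only [mem_filter, mem_product, Equiv.prodComm_apply, Prod.fst_swap, Prod.snd_swap]
      constructor <;> rintro ⟨⟨h₁, h₂⟩, h₃⟩ <;> exact ⟨⟨h₂, h₁⟩, by omega⟩
    · simp only [Equiv.prodComm_apply, Prod.fst_swap, Prod.snd_swap, powDefect_swap d v kj.1]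
      ring
  simp only [pairMinor, Rat.cast_sub, Rat.cast_mul, sub_mul, sum_sub_distrib]
  rw [hswap, h]
  ring

theorem exists_powDefectVanishes
    (h : ∀ v : ℝ, v ≠ 0 → ∀ n : ℤ, ∑ kj ∈ s ×ˢ s with kj.1 + kj.2 - 1 = n,
      ((pairMinor p q kj.1 kj.2 : ℚ) : ℝ) * powDefect d v kj.1 kj.2 = 0)
    (hpair : ∃ k ∈ s, ∃ j ∈ s, pairMinor p q k j ≠ 0) :
    ∃ k ∈ s, ∃ l ∈ s, k < l ∧ PowDefectVanishes d k l := by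
  obtain ⟨k₀, hk₀, l₀, hl₀, hlt, hw, hext⟩ := exists_extremal_pairMinor p q s hpair
  refine ⟨k₀, hk₀, l₀, hl₀, hlt, fun v hv => ?_⟩
  -- by extremality only `(k₀, l₀)` and `(l₀, k₀)` contribute to this component
  have hv₀ := h v hv (k₀ + l₀ - 1)
  rw [sum_eq_add_of_mem (k₀, l₀) (l₀, k₀) (by simp [hk₀, hl₀]) (by simp [hk₀, hl₀]; ring)
    (by simp [hlt.ne]) ?_] at hv₀
  · simp only [pairMinor_swap p q k₀, powDefect_swap d v k₀, Rat.cast_neg] at hv₀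
    have h2 : (2 * (pairMinor p q k₀ l₀ : ℚ) : ℝ) * powDefect d v k₀ l₀ = 0 := by
      linear_combination hv₀
    exact (mul_eq_zero.mp h2).resolve_left (by exact_mod_cast mul_ne_zero two_ne_zero hw)
  · rintro ⟨k, j⟩ hkj ⟨hne₁, hne₂⟩
    simp only [mem_filter, mem_product] at hkj
    obtain ⟨⟨hk, hj⟩, hsum⟩ := hkj
    suffices pairMinor p q k j = 0 by simp [this]
    rcases lt_trichotomy k j with hkj | rfl | hkj
    · exact hext k hk j hj hkj (by omega) (by rintro rfl; exact hne₁ (by ext <;> simp; omega))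
    · exact pairMinor_self p q k
    · rw [pairMinor_swap, hext j hj k hk hkj (by omega)
        (by rintro rfl; exact hne₂ (by ext <;> simp; omega)), neg_zero]

end GradedSums

section FiniteSupport

variable {p q : ℤ → ℚ} {s : Finset ℤ}

theorem mem_of_pairMinor_ne_zero (hps : Function.support p ⊆ s) (hqs : Function.support q ⊆ s)
    {k l : ℤ} (h : pairMinor p q k l ≠ 0) : k ∈ s := by
  by_contra hk
  refine h (pairMinor_eq_zero_of_left p q ⟨?_, ?_⟩)
  · exact Function.notMem_support.mp fun hk' => hk (hps hk')
  · exact Function.notMem_support.mp fun hk' => hk (hqs hk')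

theorem finsum_ratCast_mul_eq_sum {c : ℤ → ℚ} (hcs : Function.support c ⊆ s) (g : ℤ → ℝ) :
    ∑ᶠ k, (c k : ℝ) * g k = ∑ k ∈ s, (c k : ℝ) * g k :=
  finsum_eq_sum_of_support_subset _ fun k hk => hcs fun hc => hk (by simp [hc])

theorem sum_powDefect_eq_zero_of_derivates (d : ℝ →+ ℝ) (hps : Function.support p ⊆ s)
    (hqs : Function.support q ⊆ s) {u : ℝ} (hQ' : ∑ᶠ k : ℤ, (q k : ℝ) * (k : ℝ) * u ^ (k - 1) ≠ 0)
    (h : d (∑ᶠ k : ℤ, (p k : ℝ) * u ^ k) = (∑ᶠ k : ℤ, (p k : ℝ) * (k : ℝ) * u ^ (k - 1)) *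
      (1 / ∑ᶠ k : ℤ, (q k : ℝ) * (k : ℝ) * u ^ (k - 1)) * d (∑ᶠ k : ℤ, (q k : ℝ) * u ^ k)) :
    ∑ kj ∈ s ×ˢ s, (p kj.1 * q kj.2 : ℝ) * powDefect d u kj.1 kj.2 = 0 := by
  simp only [mul_assoc, finsum_ratCast_mul_eq_sum hps, finsum_ratCast_mul_eq_sum hqs, map_sum,
    map_ratCast_mul] at h hQ'
  have hexpand : ∑ kj ∈ s ×ˢ s, (p kj.1 * q kj.2 : ℝ) * powDefect d u kj.1 kj.2 =
      (∑ k ∈ s, (p k : ℝ) * d (u ^ k)) * (∑ j ∈ s, (q j : ℝ) * (j * u ^ (j - 1))) -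
      (∑ k ∈ s, (p k : ℝ) * (k * u ^ (k - 1))) * (∑ j ∈ s, (q j : ℝ) * d (u ^ j)) := by
    rw [sum_product, sum_mul_sum, sum_mul_sum, ← sum_sub_distrib]
    refine sum_congr rfl fun k _ => ?_
    rw [← sum_sub_distrib]
    refine sum_congr rfl fun j _ => ?_
    unfold powDefect
    ring
  rw [hexpand, h, one_div]
  linear_combination (∑ k ∈ s, (p k : ℝ) * (k * u ^ (k - 1))) * (∑ j ∈ s, (q j : ℝ) * d (u ^ j)) *
    mul_inv_cancel₀ hQ'

end FiniteSupport

theorem exists_linear_relation_of_pairMinor_eq_zero {K : Type*} [Field K] (p q : ℤ → K)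
    (h : ∀ k l : ℤ, k ≠ 0 → l ≠ 0 → pairMinor p q k l = 0) :
    ∃ c₁ c₂ : K, (c₁, c₂) ≠ (0, 0) ∧ ∀ k : ℤ, k ≠ 0 → c₁ * p k + c₂ * q k = 0 := by
  by_cases hex : ∃ k₀ : ℤ, k₀ ≠ 0 ∧ (p k₀ ≠ 0 ∨ q k₀ ≠ 0)
  · obtain ⟨k₀, hk₀, hpq⟩ := hex
    refine ⟨q k₀, -p k₀, fun he => ?_, fun k hk => ?_⟩
    · simp only [Prod.mk.injEq, neg_eq_zero] at he
      tauto
    · have := h k₀ k hk₀ hk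
      unfold pairMinor at this
      linear_combination -this
  · refine ⟨1, 0, by simp, fun k hk => ?_⟩
    have : p k = 0 := by_contra fun hpk => hex ⟨k, hk, Or.inl hpk⟩
    simp [this]

theorem linearCombination_finsum_sub_const_eq_zero {p q : ℤ → ℚ} (hp : (Function.support p).Finite)
    (hq : (Function.support q).Finite) {c₁ c₂ : ℝ}
    (hc : ∀ k : ℤ, k ≠ 0 → c₁ * p k + c₂ * q k = 0) (u : ℝ) :
    c₁ * (∑ᶠ k : ℤ, (p k : ℝ) * u ^ k - p 0) + c₂ * (∑ᶠ k : ℤ, (q k : ℝ) * u ^ k - q 0) = 0 := by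
  have hfin : ∀ c : ℤ → ℚ, (Function.support c).Finite → ∀ r : ℝ,
      Function.HasFiniteSupport fun k => r * ((c k : ℝ) * u ^ k) := fun c hc r =>
    hc.subset fun k hk => by simpa using left_ne_zero_of_mul (right_ne_zero_of_mul hk)
  have hsum : c₁ * ∑ᶠ k : ℤ, (p k : ℝ) * u ^ k + c₂ * ∑ᶠ k : ℤ, (q k : ℝ) * u ^ k =
      c₁ * p 0 + c₂ * q 0 := by
    rw [mul_finsum, mul_finsum, ← finsum_add_distrib (hfin p hp c₁) (hfin q hq c₂),
      finsum_eq_single _ 0 fun k hk => by linear_combination u ^ k * hc k hk]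
    simp
  linear_combination hsum

theorem exists_pairMinor_ne_zero {p q : ℤ → ℚ} (hp : (Function.support p).Finite)
    (hq : (Function.support q).Finite) {I : Set ℝ} {P Q : ℝ → ℝ}
    (hP : ∀ u : ℝ, P u = ∑ᶠ k : ℤ, (p k : ℝ) * u ^ k)
    (hQ : ∀ u : ℝ, Q u = ∑ᶠ k : ℤ, (q k : ℝ) * u ^ k)
    (hindep : ¬ ∃ c₁ c₂ : ℝ, (c₁, c₂) ≠ (0, 0) ∧ ∀ u ∈ I,
      c₁ * (P u - (p 0 : ℝ)) + c₂ * (Q u - (q 0 : ℝ)) = 0) :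
    ∃ k l : ℤ, k ≠ 0 ∧ l ≠ 0 ∧ pairMinor p q k l ≠ 0 := by
  by_contra! hall
  obtain ⟨c₁, c₂, hc, hrel⟩ := exists_linear_relation_of_pairMinor_eq_zero p q hall
  refine hindep ⟨c₁, c₂, by simpa using hc, fun u _ => ?_⟩
  rw [hP, hQ]
  exact linearCombination_finsum_sub_const_eq_zero hp hq (fun k hk => by exact_mod_cast hrel k hk) u

theorem sum_filter_erase_zero_eq (d : ℝ →+ ℝ) (hd : d 1 = 0) (w : ℤ → ℤ → ℝ) (s : Finset ℤ)
    (v : ℝ) (n : ℤ) :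
    ∑ kj ∈ s.erase 0 ×ˢ s.erase 0 with kj.1 + kj.2 - 1 = n, w kj.1 kj.2 * powDefect d v kj.1 kj.2 =
      ∑ kj ∈ s ×ˢ s with kj.1 + kj.2 - 1 = n, w kj.1 kj.2 * powDefect d v kj.1 kj.2 := by
  refine sum_subset (filter_subset_filter _ (product_subset_product (erase_subset _ _)
    (erase_subset _ _))) fun ⟨k, j⟩ hkj hnot => ?_
  simp only [mem_filter, mem_product, mem_erase] at hkj hnot
  rcases eq_or_ne k 0 with rfl | hk
  · rw [powDefect_zero_left d hd, mul_zero]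
  · obtain rfl : j = 0 := by tauto
    rw [powDefect_zero_right d hd, mul_zero]

theorem leibniz_of_map_sq (d : ℝ →+ ℝ) (h : ∀ x, d (x ^ 2) = 2 * x * d x) (x y : ℝ) :
    d (x * y) = d x * y + x * d y := by
  have hxy := h (x + y)
  rw [show (x + y) ^ 2 = x ^ 2 + y ^ 2 + (2 : ℕ) • (x * y) by ring, map_add, map_add, map_nsmul,
    h x, h y, map_add] at hxy
  linear_combination hxy / 2

theorem map_sq_of_map_inv (d : ℝ →+ ℝ) (h : ∀ y, 0 < y → y ^ 2 * d y⁻¹ + d y = 0) (x : ℝ) :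
    d (x ^ 2) = 2 * x * d x := by
  have hd1 : d 1 = 0 := by simpa using h 1 one_pos
  have hpos : ∀ x, 0 < x → d (x ^ 2) = 2 * x * d x := by
    intro x hx
    have hx₁ : 0 < x + 1 := by linarith
    -- `1 / (x (x + 1)) = 1 / x - 1 / (x + 1)` links the three instances of `h`
    have hsplit : (x * (x + 1))⁻¹ = x⁻¹ - (x + 1)⁻¹ := by field_simp; ring
    have hA := h x hx
    have hB := h (x + 1) hx₁
    have hC := h (x * (x + 1)) (by positivity)
    rw [hsplit, map_sub, show x * (x + 1) = x ^ 2 + x by ring, map_add] at hC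
    rw [map_add, hd1, add_zero] at hB
    linear_combination hC - (x + 1) ^ 2 * hA + x ^ 2 * hB
  rcases lt_trichotomy x 0 with hx | rfl | hx
  · have := hpos (-x) (neg_pos.mpr hx)
    rw [neg_sq, map_neg] at this
    linear_combination this
  · simp
  · exact hpos x hx

theorem PowDefectVanishes.map_inv {d : ℝ →+ ℝ} {L : ℤ} (h : PowDefectVanishes d (-L) L)
    (hL : 0 < L) (y : ℝ) (hy : 0 < y) : y ^ 2 * d y⁻¹ + d y = 0 := by
  lift L to ℕ using hL.le
  have hL₀ : L ≠ 0 := by exact_mod_cast hL.ne'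
  set v := y ^ (L⁻¹ : ℝ)
  have hv : 0 < v := Real.rpow_pos_of_pos hy _
  have hvL : v ^ (L : ℤ) = y := by rw [zpow_natCast, Real.rpow_inv_natCast_pow hy.le hL₀]
  have hrel := h v hv.ne'
  have e₁ : v ^ ((L : ℤ) - 1) = y * v⁻¹ := by rw [zpow_sub_one₀ hv.ne', hvL]
  have e₂ : v ^ (-(L : ℤ) - 1) = y⁻¹ * v⁻¹ := by rw [zpow_sub_one₀ hv.ne', zpow_neg, hvL]
  rw [powDefect, e₁, e₂, zpow_neg, hvL] at hrel
  have hc : (L : ℝ) * v⁻¹ * y⁻¹ ≠ 0 := by positivity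
  refine (mul_eq_zero.mp ?_).resolve_left hc
  rw [← hrel]
  field_simp
  push_cast
  ring

noncomputable def binomialPoly (f : ℝ →+ ℝ) (x : ℝ) (n : ℕ) : ℝ[X] :=
  ∑ i ∈ range (n + 1), C (n.choose i * f (x ^ i)) * X ^ i

theorem coeff_binomialPoly (f : ℝ →+ ℝ) (x : ℝ) (n i : ℕ) :
    (binomialPoly f x n).coeff i = n.choose i * f (x ^ i) := by
  simp only [binomialPoly, finsetSum_coeff, coeff_C_mul_X_pow, sum_ite_eq, mem_range]
  split_ifs with hi
  · rfl
  · rw [Nat.choose_eq_zero_of_lt (by omega), Nat.cast_zero, zero_mul]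

theorem eval_binomialPoly (f : ℝ →+ ℝ) (x : ℝ) (n : ℕ) (t : ℚ) :
    (binomialPoly f x n).eval (t : ℝ) = f ((1 + t * x) ^ n) := by
  rw [add_comm, add_pow, map_sum, binomialPoly, eval_finsetSum]
  refine sum_congr rfl fun i _ => ?_
  rw [show ((t : ℝ) * x) ^ i * 1 ^ (n - i) * (n.choose i : ℝ) =
    ((t ^ i * n.choose i : ℚ) : ℝ) * x ^ i by push_cast; ring, map_ratCast_mul]
  simp only [eval_mul, eval_C, eval_pow, eval_X]
  push_cast
  ring

theorem map_sq_of_pow_succ_rel (d : ℝ →+ ℝ) {m n : ℕ} (hmn : m ≠ n) (hd1 : d 1 = 0)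
    (h : ∀ v : ℝ, v ≠ 0 →
      (n + 1 : ℝ) * v ^ n * d (v ^ (m + 1)) = (m + 1) * v ^ m * d (v ^ (n + 1)))
    (x : ℝ) : d (x ^ 2) = 2 * x * d x := by
  set B := binomialPoly (AddMonoidHom.id ℝ) x
  set A := binomialPoly d x
  -- Substituting `v = 1 + t x` for rational `t` turns `h` into a polynomial identity in `t`.
  have hpoly : C (n + 1 : ℝ) * (B n * A (m + 1)) = C (m + 1 : ℝ) * (B m * A (n + 1)) := by
    rw [← sub_eq_zero]
    apply eq_zero_of_infinite_isRoot
    have hbad : {y : ℝ | 1 + y * x = 0}.Subsingleton := fun y hy z hz => by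
      have hx : x ≠ 0 := by rintro rfl; simp at hy
      exact mul_right_cancel₀ hx (by linarith [hy.out, hz.out])
    refine ((Set.infinite_range_of_injective Rat.cast_injective).sdiff hbad.finite).mono ?_
    rintro _ ⟨⟨t, rfl⟩, ht⟩
    simp only [Set.mem_ofPred_eq, IsRoot, eval_sub, eval_mul, eval_C, B, A, eval_binomialPoly,
      AddMonoidHom.id_apply]
    linear_combination h _ ht
  have h2 := congrArg (coeff · 2) hpoly
  simp only [coeff_C_mul] at h2
  simp only [coeff_mul, Nat.sum_antidiagonal_eq_sum_range_succ_mk, sum_range_succ,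
    sum_range_zero, B, A, coeff_binomialPoly, AddMonoidHom.id_apply] at h2
  norm_num [Nat.cast_choose_two, hd1] at h2
  have hmn' : ((n : ℝ) + 1) * (m + 1) * (m - n) ≠ 0 := by
    have : (m : ℝ) - n ≠ 0 := sub_ne_zero.mpr (Nat.cast_injective.ne hmn)
    positivity
  rw [← sub_eq_zero]
  refine (mul_eq_zero.mp ?_).resolve_left hmn'
  linear_combination 2 * h2

theorem PowDefectVanishes.map_sq_of_pos {d : ℝ →+ ℝ} {K L : ℤ} (h : PowDefectVanishes d K L)
    (hK : 0 < K) (hL : 0 < L) (hKL : K ≠ L) (x : ℝ) : d (x ^ 2) = 2 * x * d x := by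
  obtain ⟨m, rfl⟩ : ∃ m : ℕ, K = m + 1 := ⟨K.toNat - 1, by omega⟩
  obtain ⟨n, rfl⟩ : ∃ n : ℕ, L = n + 1 := ⟨L.toNat - 1, by omega⟩
  refine map_sq_of_pow_succ_rel d (m := m) (n := n) (by omega) (h.map_one hKL) (fun v hv => ?_) x
  have := h v hv
  rw [powDefect, add_sub_cancel_right, add_sub_cancel_right] at this
  simp only [← Nat.cast_add_one, zpow_natCast] at this
  push_cast at this
  linear_combination this

theorem PowDefectVanishes.leibniz {d : ℝ →+ ℝ} {K L : ℤ} (h : PowDefectVanishes d K L)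
    (hK : K ≠ 0) (hL : L ≠ 0) (hKL : K ≠ L) (x y : ℝ) : d (x * y) = d x * y + x * d y := by
  refine leibniz_of_map_sq d (fun x => ?_) x y
  by_cases hsym : K + L = 0
  · apply map_sq_of_map_inv d
    rcases hL.lt_or_gt with hL' | hL'
    · obtain rfl : L = -K := by omega
      exact h.symm.map_inv (by omega)
    · obtain rfl : K = -L := by omega
      exact h.map_inv hL'
  · refine (h.sq hK hL).map_sq_of_pos (mul_self_pos.mpr hK) (mul_self_pos.mpr hL) (fun he => ?_) x
    rcases mul_self_eq_mul_self_iff.mp he with he | he <;> omega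

/-- If an additive function `d` derivates `P ∘ Q⁻¹` on `Q(I)`, where `P`, `Q` are Laurent
polynomials with rational coefficients on a nonempty open interval `I` not containing `0`,
`Q'` is nowhere zero on `I`, and `P - p₀`, `Q - q₀` are linearly independent, then `d` is
a standard derivation. -/
theorem stmt_18 (d : ℝ → ℝ) (hd : ∀ x y : ℝ, d (x + y) = d x + d y)
    (a b : ℝ) (hab : a < b) (h0 : (0 : ℝ) ∉ Set.Ioo a b)
    (p q : ℤ → ℚ) (hp : (Function.support p).Finite) (hq : (Function.support q).Finite)
    (P Q P' Q' Qinv : ℝ → ℝ)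
    (hP : ∀ u : ℝ, P u = ∑ᶠ k : ℤ, (p k : ℝ) * u ^ k)
    (hQ : ∀ u : ℝ, Q u = ∑ᶠ k : ℤ, (q k : ℝ) * u ^ k)
    (hP' : ∀ u : ℝ, P' u = ∑ᶠ k : ℤ, (p k : ℝ) * (k : ℝ) * u ^ (k - 1))
    (hQ' : ∀ u : ℝ, Q' u = ∑ᶠ k : ℤ, (q k : ℝ) * (k : ℝ) * u ^ (k - 1))
    (hQ'ne : ∀ u ∈ Set.Ioo a b, Q' u ≠ 0)
    (hQinv : ∀ u ∈ Set.Ioo a b, Qinv (Q u) = u)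
    (hindep : ¬ ∃ c₁ c₂ : ℝ, (c₁, c₂) ≠ (0, 0) ∧ ∀ u ∈ Set.Ioo a b,
      c₁ * (P u - (p 0 : ℝ)) + c₂ * (Q u - (q 0 : ℝ)) = 0)
    (hder : ∀ v ∈ Q '' Set.Ioo a b,
      d (P (Qinv v)) = P' (Qinv v) * (1 / Q' (Qinv v)) * d v) :
    ∀ x y : ℝ, d (x * y) = d x * y + x * d y := by
  set D : ℝ →+ ℝ := AddMonoidHom.mk' d hd
  set s := hp.toFinset ∪ hq.toFinset
  have hps : Function.support p ⊆ s := fun k hk => by simp [s, hk]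
  have hqs : Function.support q ⊆ s := fun k hk => by simp [s, hk]
  have hgraded : ∀ v : ℝ, v ≠ 0 → ∀ n : ℤ, ∑ kj ∈ s ×ˢ s with kj.1 + kj.2 - 1 = n,
      ((pairMinor p q kj.1 kj.2 : ℚ) : ℝ) * powDefect D v kj.1 kj.2 = 0 := by
    refine fun v hv n => sum_filter_pairMinor_mul_powDefect_eq_zero D p q s
      (sum_filter_powDefect_eq_zero D p q s hab h0 (fun u hu => ?_) hv n)
    have h := hder (Q u) ⟨u, hu, rfl⟩
    have hQu := hQ'ne u hu
    rw [hQinv u hu, hP, hP', hQ', hQ] at h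
    rw [hQ'] at hQu
    exact sum_powDefect_eq_zero_of_derivates D hps hqs hQu h
  obtain ⟨k, l, hk, hl, hkl⟩ := exists_pairMinor_ne_zero hp hq hP hQ hindep
  have hks := mem_of_pairMinor_ne_zero hps hqs hkl
  have hls : l ∈ s :=
    mem_of_pairMinor_ne_zero hps hqs (l := k) (by rwa [pairMinor_swap, neg_ne_zero])
  obtain ⟨k₀, -, l₀, -, hlt₀, h₀⟩ := exists_powDefectVanishes D p q s hgraded ⟨k, hks, l, hls, hkl⟩
  -- once `d 1 = 0`, the exponent `0` drops out and a second pass yields a pair of nonzero exponents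
  have hd1 : D 1 = 0 := h₀.map_one hlt₀.ne
  have hgraded' := fun v hv n =>
    (sum_filter_erase_zero_eq D hd1 (fun k j => ((pairMinor p q k j : ℚ) : ℝ)) s v n).trans
      (hgraded v hv n)
  obtain ⟨K, hK, L, hL, hKL, hrel⟩ := exists_powDefectVanishes D p q (s.erase 0) hgraded'
    ⟨k, mem_erase.mpr ⟨hk, hks⟩, l, mem_erase.mpr ⟨hl, hls⟩, hkl⟩
  exact hrel.leibniz (ne_of_mem_erase hK) (ne_of_mem_erase hL) hKL.ne
end
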